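/- arXiv:1802.08361 — 5 statements merged into one kernel-verified Lean document; each statement's English description precedes it below -/
import Mathlib

section
/- Fix r ∈ ℛ, p ∈ 𝒫 and i ∈ {1,…,n}, and consider the function s ↦ c_i(r,s,p) = 1 − r_i^{-s} p_i − r_i^s p_i − 2 Σ_{k≠i} r_k^s p_k on [0,∞). Then: (1) c_i(r,0,p) = 0 and its derivative at s = 0 equals −2 Σ_{k≠i} (log r_k) p_k > 0; (2) its second derivative is strictly negative on (0,∞); (3) c_i(r,s,p) → −∞ as s → ∞. Consequently c_i(r,·,p) has a unique zero s_i = s_i(r,p) in (0,∞), and the derivative of c_i(r,·,p) at s_i is strictly negative. -/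
open Filter

namespace Cogrowth

noncomputable section

/-- Weighted length of a free group element given edge-length parameter `r`. -/
def wlen {n : ℕ} (r : Fin n → ℝ) (g : FreeGroup (Fin n)) : ℝ :=
  ((FreeGroup.toWord g).map fun l => - Real.log (r l.1)).sum

/-- Poincaré exponent of a subgroup `G` with respect to the weighted length `wlen r`. -/
def pexp {n : ℕ} (r : Fin n → ℝ) (G : Subgroup (FreeGroup (Fin n))) : ℝ :=
  limsup (fun R : ℝ =>
    Real.log (Nat.card {g : FreeGroup (Fin n) // g ∈ G ∧ wlen r g ≤ R}) / R) atTop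

/-- Poincaré exponent of the full free group. -/
def delta {n : ℕ} (r : Fin n → ℝ) : ℝ := pexp r ⊤

/-- Poincaré exponent with respect to the word metric. -/
def wordexp {n : ℕ} (G : Subgroup (FreeGroup (Fin n))) : ℝ :=
  limsup (fun R : ℝ =>
    Real.log (Nat.card {g : FreeGroup (Fin n) // g ∈ G ∧ ((FreeGroup.toWord g).length : ℝ) ≤ R}) / R) atTop

/-- The space of left cosets `Gx`. -/
abbrev Cosets {n : ℕ} (G : Subgroup (FreeGroup (Fin n))) := Quotient (QuotientGroup.rightRel G)

/-- Right multiplication on cosets: `Gx ↦ Gxa`. -/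
def rmul {n : ℕ} (G : Subgroup (FreeGroup (Fin n))) (a : FreeGroup (Fin n)) (x : Cosets G) :
    Cosets G :=
  Quotient.map (· * a) (fun x y h => by
    have h' : y * x⁻¹ ∈ G := QuotientGroup.rightRel_apply.mp h
    exact QuotientGroup.rightRel_apply.mpr (by simpa [mul_inv_rev, mul_assoc] using h')) x

/-- The weighted transition operator `A_p` on functions on `G\F_n` (pointwise formula). -/
def Aq {n : ℕ} (G : Subgroup (FreeGroup (Fin n))) (p : Fin n → ℝ) (f : Cosets G → ℝ)
    (x : Cosets G) : ℝ :=
  ∑ i, p i * (f (rmul G (FreeGroup.of i) x) + f (rmul G (FreeGroup.of i)⁻¹ x))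

/-- Bottom of the spectrum of `Δ_p = I - A_p` on `ℓ²(G\F_n)`. -/
def lambda0 {n : ℕ} (G : Subgroup (FreeGroup (Fin n))) (p : Fin n → ℝ) : ℝ :=
  sInf { L : ℝ | ∃ f : Cosets G → ℝ, Memℓp f 2 ∧ (∑' x, f x ^ 2) = 1 ∧
    L = ∑' x, (f x - Aq G p f x) * f x }

/-- The weighted transition operator `A_p` on functions on `F_n`. -/
def Afree {n : ℕ} (p : Fin n → ℝ) (f : FreeGroup (Fin n) → ℝ) (x : FreeGroup (Fin n)) : ℝ :=
  ∑ i, p i * (f (x * FreeGroup.of i) + f (x * (FreeGroup.of i)⁻¹))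

/-- Bottom of the spectrum of `Δ_p = I - A_p` on `ℓ²(F_n)`. -/
def lambda0F {n : ℕ} (p : Fin n → ℝ) : ℝ :=
  sInf { L : ℝ | ∃ f : FreeGroup (Fin n) → ℝ, Memℓp f 2 ∧ (∑' x, f x ^ 2) = 1 ∧
    L = ∑' x, (f x - Afree p f x) * f x }

/-- Spectral radius of `A_p` on `ℓ²(F_n)`. -/
def rhoF {n : ℕ} (p : Fin n → ℝ) : ℝ :=
  sSup { L : ℝ | ∃ f : FreeGroup (Fin n) → ℝ, Memℓp f 2 ∧ (∑' x, f x ^ 2) = 1 ∧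
    L = ∑' x, Afree p f x * f x }

/-- `D(u) = Σ_j ∏_{k≠j} (u_k⁻¹ - u_k)`. -/
def Dfun {n : ℕ} (u : Fin n → ℝ) : ℝ :=
  ∑ j, ∏ k ∈ Finset.univ.erase j, ((u k)⁻¹ - u k)

/-- The weight `p(u)` determined by `u`. -/
def pfun {n : ℕ} (u : Fin n → ℝ) (i : Fin n) : ℝ :=
  (∏ k ∈ Finset.univ.erase i, ((u k)⁻¹ - u k)) / (2 * Dfun u)

/-- The common eigenvalue `λ(u)`. -/
def lamfun {n : ℕ} (u : Fin n → ℝ) : ℝ :=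
  (Dfun u)⁻¹ * ((∑ j, (1 - u j) * ∏ k ∈ Finset.univ.erase j, ((u k)⁻¹ - u k)) -
    (1 / 2) * ∏ l, ((u l)⁻¹ - u l))

/-- `l(u) = 2 Σ_j u_j ∏_{k≠j}(1+u_k) - ∏_ℓ (1+u_ℓ)`. -/
def lfun {n : ℕ} (u : Fin n → ℝ) : ℝ :=
  2 * ∑ j, u j * ∏ k ∈ Finset.univ.erase j, (1 + u k) - ∏ l, (1 + u l)

/-- `c_i(u,p) = 1 - 2 Σ_k u_k p_k - (u_i⁻¹ - u_i) p_i`. -/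
def cfun {n : ℕ} (u p : Fin n → ℝ) (i : Fin n) : ℝ :=
  1 - 2 * ∑ k, u k * p k - ((u i)⁻¹ - u i) * p i

/-- `H(r,s) = (r_1^s, …, r_n^s)`. -/
def Hmap {n : ℕ} (r : Fin n → ℝ) (s : ℝ) : Fin n → ℝ := fun i => r i ^ s

/-- The curve `γ_p(τ)`, the solution `u_i ∈ (0,1)` of `(u⁻¹ - u) p_i = τ`. -/
def gam {n : ℕ} (p : Fin n → ℝ) (τ : ℝ) : Fin n → ℝ := fun i =>
  (Real.sqrt (τ ^ 2 * ((p i)⁻¹) ^ 2 + 4) - τ * (p i)⁻¹) / 2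

end

end Cogrowth

/-!
Every term of `c` other than the constant is a negative multiple of an exponential in `s`, so
`c'' < 0` and `c'` is strictly decreasing. As `c 0 = 0` and `c' 0 > 0`, `c` is positive just
after `0`, and it tends to `-∞`, so it has a positive zero. Between `0` and a positive zero `s`,
Rolle's theorem gives a critical point `ξ`; then `c' s < c' ξ = 0`. A second zero `t > s` would
give a critical point beyond `s`, where `c'` would already be negative.
-/

open Real Set Filter Finset

section PositiveZero

variable {f : ℝ → ℝ}

theorem exists_gt_pos_of_deriv_pos {x₀ : ℝ} (hf₀ : f x₀ = 0) (hd : 0 < deriv f x₀) :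
    ∃ a, x₀ < a ∧ 0 < f a := by
  have hslope := hasDerivAt_iff_tendsto_slope.mp
    (differentiableAt_of_deriv_ne_zero hd.ne').hasDerivAt
  obtain ⟨a, ha_slope, ha⟩ := (((hslope.eventually (eventually_gt_nhds hd)).filter_mono
    (nhdsGT_le_nhdsNE x₀)).and self_mem_nhdsWithin).exists
  exact ⟨a, ha, pos_of_slope_pos ha ha_slope hf₀⟩

theorem deriv_neg_of_pos_zero (hf : Continuous f) (hf₀ : f 0 = 0)
    (hanti : StrictAntiOn (deriv f) (Ioi 0)) {s : ℝ} (hs : 0 < s) (hfs : f s = 0) :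
    deriv f s < 0 := by
  obtain ⟨ξ, hξ, hξ₀⟩ := exists_deriv_eq_zero hs hf.continuousOn (hf₀.trans hfs.symm)
  exact hξ₀ ▸ hanti hξ.1 hs hξ.2

theorem not_lt_of_pos_zeros (hf : Continuous f) (hf₀ : f 0 = 0)
    (hanti : StrictAntiOn (deriv f) (Ioi 0)) {s t : ℝ} (hs : 0 < s) (hfs : f s = 0)
    (hft : f t = 0) : ¬ s < t := fun hst => by
  obtain ⟨ξ, hξ, hξ₀⟩ := exists_deriv_eq_zero hst hf.continuousOn (hfs.trans hft.symm)
  have := hanti hs (hs.trans hξ.1) hξ.1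
  linarith [deriv_neg_of_pos_zero hf hf₀ hanti hs hfs]

theorem existsUnique_pos_zero (hf : Continuous f) (hf₀ : f 0 = 0)
    (hanti : StrictAntiOn (deriv f) (Ioi 0)) (hd₀ : 0 < deriv f 0)
    (htop : Tendsto f atTop atBot) : ∃! s, 0 < s ∧ f s = 0 := by
  obtain ⟨a, ha, hfa⟩ := exists_gt_pos_of_deriv_pos hf₀ hd₀
  obtain ⟨b, hfb, hab⟩ :=
    ((htop.eventually (eventually_lt_atBot 0)).and (eventually_gt_atTop a)).exists
  obtain ⟨s, hs, hfs⟩ := intermediate_value_Ioo' hab.le hf.continuousOn ⟨hfb, hfa⟩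
  have hs₀ : 0 < s := ha.trans hs.1
  refine ⟨s, ⟨hs₀, hfs⟩, fun t ⟨ht, hft⟩ => le_antisymm ?_ ?_⟩
  · exact not_lt.1 (not_lt_of_pos_zeros hf hf₀ hanti hs₀ hfs hft)
  · exact not_lt.1 (not_lt_of_pos_zeros hf hf₀ hanti ht hft hfs)

end PositiveZero

theorem hasDerivAt_rpow_neg {a : ℝ} (ha : 0 < a) (s : ℝ) :
    HasDerivAt (fun t => a ^ (-t)) (-(a ^ (-s) * log a)) s := by
  simpa [Function.comp_def] using
    (hasStrictDerivAt_const_rpow ha (-s)).hasDerivAt.comp s (hasDerivAt_neg s)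

noncomputable section CCurve

variable {n : ℕ} (r p : Fin n → ℝ) (i : Fin n)

def cCurve (s : ℝ) : ℝ :=
  1 - r i ^ (-s) * p i - r i ^ s * p i - 2 * ∑ k ∈ univ.erase i, r k ^ s * p k

def cCurveDeriv (s : ℝ) : ℝ :=
  log (r i) * p i * (r i ^ (-s) - r i ^ s) - 2 * ∑ k ∈ univ.erase i, log (r k) * p k * r k ^ s

def cCurveDeriv2 (s : ℝ) : ℝ :=
  -(log (r i) ^ 2 * p i * (r i ^ (-s) + r i ^ s)) -
    2 * ∑ k ∈ univ.erase i, log (r k) ^ 2 * p k * r k ^ s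

theorem cCurve_zero {p : Fin n → ℝ} (hpsum : ∑ k, p k = 1 / 2) : cCurve r p i 0 = 0 := by
  have := sum_erase_add _ p (mem_univ i)
  simp only [cCurve, neg_zero, rpow_zero, one_mul]
  linarith

variable {r}

theorem cCurveDeriv_zero : cCurveDeriv r p i 0 = -2 * ∑ k ∈ univ.erase i, log (r k) * p k := by
  simp only [cCurveDeriv, neg_zero, rpow_zero, mul_one, sub_self, mul_zero, zero_sub]
  ring

theorem hasDerivAt_cCurve (hr : ∀ k, 0 < r k) (s : ℝ) :
    HasDerivAt (cCurve r p i) (cCurveDeriv r p i s) s := by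
  have hsum : HasDerivAt (fun t => ∑ k ∈ univ.erase i, r k ^ t * p k)
      (∑ k ∈ univ.erase i, log (r k) * p k * r k ^ s) s :=
    HasDerivAt.fun_sum fun k _ =>
      ((hasStrictDerivAt_const_rpow (hr k) s).hasDerivAt.mul_const (p k)).congr_deriv (by ring)
  refine ((((hasDerivAt_const s 1).sub ((hasDerivAt_rpow_neg (hr i) s).mul_const (p i))).sub
    ((hasStrictDerivAt_const_rpow (hr i) s).hasDerivAt.mul_const (p i))).sub
    (hsum.const_mul 2)).congr_deriv ?_
  simp only [cCurveDeriv]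
  ring

theorem hasDerivAt_cCurveDeriv (hr : ∀ k, 0 < r k) (s : ℝ) :
    HasDerivAt (cCurveDeriv r p i) (cCurveDeriv2 r p i s) s := by
  have hsum : HasDerivAt (fun t => ∑ k ∈ univ.erase i, log (r k) * p k * r k ^ t)
      (∑ k ∈ univ.erase i, log (r k) ^ 2 * p k * r k ^ s) s :=
    HasDerivAt.fun_sum fun k _ =>
      ((hasStrictDerivAt_const_rpow (hr k) s).hasDerivAt.const_mul (log (r k) * p k)).congr_deriv
        (by ring)
  refine ((((hasDerivAt_rpow_neg (hr i) s).sub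
    (hasStrictDerivAt_const_rpow (hr i) s).hasDerivAt).const_mul (log (r i) * p i)).sub
    (hsum.const_mul 2)).congr_deriv ?_
  simp only [cCurveDeriv2]
  ring

theorem deriv_cCurve (hr : ∀ k, 0 < r k) : deriv (cCurve r p i) = cCurveDeriv r p i :=
  funext fun s => (hasDerivAt_cCurve p i hr s).deriv

theorem deriv_cCurveDeriv (hr : ∀ k, 0 < r k) : deriv (cCurveDeriv r p i) = cCurveDeriv2 r p i :=
  funext fun s => (hasDerivAt_cCurveDeriv p i hr s).deriv

variable {p}

theorem cCurveDeriv2_neg (hr : ∀ k, 0 < r k) (hri : r i ≠ 1) (hp : ∀ k, 0 < p k) (s : ℝ) :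
    cCurveDeriv2 r p i s < 0 := by
  have hlog : log (r i) ≠ 0 := fun h => hri (eq_one_of_pos_of_log_eq_zero (hr i) h)
  have hpos : 0 < log (r i) ^ 2 * p i * (r i ^ (-s) + r i ^ s) := by
    have := hp i; have := hr i; positivity
  have hsum : 0 ≤ ∑ k ∈ univ.erase i, log (r k) ^ 2 * p k * r k ^ s :=
    sum_nonneg fun k _ => by have := hp k; have := hr k; positivity
  simp only [cCurveDeriv2]
  linarith

theorem tendsto_cCurve_atTop (hr : ∀ k, 0 < r k) (hri : r i < 1) (hp : ∀ k, 0 < p k) :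
    Tendsto (cCurve r p i) atTop atBot := by
  have hgrowth : Tendsto (fun s : ℝ => r i ^ (-s) * p i) atTop atTop := by
    simp_rw [rpow_neg (hr i).le, ← inv_rpow (hr i).le]
    exact (tendsto_rpow_atTop_of_base_gt_one _ ((one_lt_inv₀ (hr i)).2 hri)).atTop_mul_const (hp i)
  refine tendsto_atBot_mono (fun s => ?_)
    (tendsto_atBot_add_const_left _ 1 (tendsto_neg_atTop_atBot.comp hgrowth))
  have hi : 0 < r i ^ s * p i := mul_pos (rpow_pos_of_pos (hr i) s) (hp i)
  have hsum : 0 ≤ ∑ k ∈ univ.erase i, r k ^ s * p k :=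
    sum_nonneg fun k _ => (mul_pos (rpow_pos_of_pos (hr k) s) (hp k)).le
  simp only [cCurve, Function.comp_apply]
  linarith

end CCurve

/-- properties of `s ↦ c_i(r,s,p)`. -/
theorem statement6 (n : ℕ) (hn : 2 ≤ n) (r p : Fin n → ℝ) (hr : ∀ i, 0 < r i)
    (hrsum : ∑ i, r i = 1 / 2) (hp : ∀ i, 0 < p i) (hpsum : ∑ i, p i = 1 / 2)
    (i : Fin n) (c : ℝ → ℝ)
    (hc : ∀ s : ℝ, c s =
      1 - r i ^ (-s) * p i - r i ^ s * p i -
        2 * ∑ k ∈ Finset.univ.erase i, r k ^ s * p k) :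
    c 0 = 0 ∧
    deriv c 0 = -2 * ∑ k ∈ Finset.univ.erase i, Real.log (r k) * p k ∧
    0 < deriv c 0 ∧
    (∀ s : ℝ, 0 < s → deriv (deriv c) s < 0) ∧
    Filter.Tendsto c Filter.atTop Filter.atBot ∧
    (∃! s : ℝ, 0 < s ∧ c s = 0) ∧
    (∀ s : ℝ, 0 < s → c s = 0 → deriv c s < 0) := by
  obtain rfl : c = cCurve r p i := funext hc
  have hr_lt_one : ∀ k, r k < 1 := fun k => by
    linarith [single_le_sum (fun j _ => (hr j).le) (mem_univ k)]
  have hc₀ : cCurve r p i 0 = 0 := cCurve_zero r i hpsum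
  have hderiv₀ : deriv (cCurve r p i) 0 = -2 * ∑ k ∈ univ.erase i, log (r k) * p k := by
    rw [deriv_cCurve p i hr, cCurveDeriv_zero]
  have hderiv₀_pos : 0 < deriv (cCurve r p i) 0 := by
    have := Fin.nontrivial_iff_two_le.2 hn
    obtain ⟨j, hj⟩ := exists_ne i
    have := sum_neg (fun k _ => mul_neg_of_neg_of_pos (log_neg (hr k) (hr_lt_one k)) (hp k))
      ⟨j, mem_erase.2 ⟨hj, mem_univ j⟩⟩
    linarith
  have hconcave : ∀ s, 0 < s → deriv (deriv (cCurve r p i)) s < 0 := fun s _ => by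
    rw [deriv_cCurve p i hr, deriv_cCurveDeriv p i hr]
    exact cCurveDeriv2_neg i hr (hr_lt_one i).ne hp s
  have hcont : Continuous (cCurve r p i) :=
    continuous_iff_continuousAt.2 fun s => (hasDerivAt_cCurve p i hr s).continuousAt
  have hanti : StrictAntiOn (deriv (cCurve r p i)) (Ioi 0) := by
    refine strictAntiOn_of_deriv_neg (convex_Ioi 0) ?_ fun s hs =>
      hconcave s (by rwa [interior_Ioi] at hs)
    rw [deriv_cCurve p i hr]
    exact (continuous_iff_continuousAt.2 fun s =>
      (hasDerivAt_cCurveDeriv p i hr s).continuousAt).continuousOn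
  have htop := tendsto_cCurve_atTop i hr (hr_lt_one i) hp
  exact ⟨hc₀, hderiv₀, hderiv₀_pos, hconcave, htop,
    existsUnique_pos_zero hcont hc₀ hanti hderiv₀_pos htop,
    fun s hs => deriv_neg_of_pos_zero hcont hc₀ hanti hs⟩
end

section
/- Let u = (u_1,…,u_n) ∈ (0,∞)^n and suppose the system c_1(u,p) = ⋯ = c_n(u,p) with p_1+⋯+p_n = 1/2 has a solution p with p_i > 0 for all i. Then exactly one of the following holds: (i) u_i = 1 for all i, in which case D(u) = 0 and every p with Σ p_i = 1/2 is a solution with common value λ = 0; (ii) u_i > 1 for all i, in which case D(u) ≠ 0 and the common value λ(u) is strictly negative; (iii) u_i < 1 for all i, in which case D(u) ≠ 0. -/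
open Filter

/-!
Equality of the `c_i` says exactly that `(u_i⁻¹ - u_i) p_i` is a common value `τ`. As `p_i > 0`
and `u_i⁻¹ - u_i` has the sign of `1 - u_i`, the sign of `τ` puts all `u_i` on the same side
of `1`. When no factor `u_k⁻¹ - u_k` vanishes, dividing out their product gives
`D(u) = ∏ₖ (u_k⁻¹ - u_k) · Σⱼ (u_j⁻¹ - u_j)⁻¹` and
`λ(u) = (Σⱼ u_j / (1 + u_j) - 1/2) / Σⱼ (u_j⁻¹ - u_j)⁻¹`, whose signs are evident when all `u_j > 1`.
-/

namespace Cogrowth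

section InvSubSelf

variable {x : ℝ}

lemma inv_sub_self_eq (hx : x ≠ 0) : x⁻¹ - x = (1 - x) * (1 + x) / x := by
  field_simp
  ring

lemma inv_sub_self_pos_iff (hx : 0 < x) : 0 < x⁻¹ - x ↔ x < 1 := by
  rw [inv_sub_self_eq hx.ne', div_pos_iff_of_pos_right hx, mul_pos_iff_of_pos_right (by linarith)]
  exact sub_pos

lemma inv_sub_self_neg_iff (hx : 0 < x) : x⁻¹ - x < 0 ↔ 1 < x := by
  rw [inv_sub_self_eq hx.ne', div_lt_iff₀ hx, zero_mul, ← neg_pos, ← neg_mul,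
    mul_pos_iff_of_pos_right (by linarith), neg_pos, sub_neg]

lemma inv_sub_self_neg_of_one_lt (hx : 1 < x) : x⁻¹ - x < 0 :=
  (inv_sub_self_neg_iff (by linarith)).mpr hx

lemma inv_sub_self_eq_zero_iff (hx : 0 < x) : x⁻¹ - x = 0 ↔ x = 1 := by
  rw [inv_sub_self_eq hx.ne', div_eq_zero_iff, mul_eq_zero, sub_eq_zero]
  constructor
  · rintro ((h | h) | h) <;> first | exact h.symm | linarith
  · rintro rfl; simp

lemma one_sub_div_inv_sub_self (h : x⁻¹ - x ≠ 0) : (1 - x) / (x⁻¹ - x) = x / (1 + x) := by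
  have hx : x ≠ 0 := by rintro rfl; simp at h
  have hx' : 1 + x ≠ 0 := by
    intro h'
    obtain rfl : x = -1 := by linarith
    norm_num at h
  rw [div_eq_div_iff h hx']
  field_simp
  ring

lemma half_lt_div_one_add (hx : 1 < x) : 1 / 2 < x / (1 + x) := by
  rw [div_lt_div_iff₀ two_pos (by linarith)]
  linarith

end InvSubSelf

lemma forall_eq_one_or_forall_one_lt_or_forall_lt_one {ι : Type*} {u p : ι → ℝ}
    (hu : ∀ i, 0 < u i) (hp : ∀ i, 0 < p i)
    (h : ∀ i j, ((u i)⁻¹ - u i) * p i = ((u j)⁻¹ - u j) * p j) :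
    (∀ i, u i = 1) ∨ (∀ i, 1 < u i) ∨ (∀ i, u i < 1) := by
  rcases isEmpty_or_nonempty ι with _ | ⟨⟨i₀⟩⟩
  · exact Or.inl isEmptyElim
  set τ := ((u i₀)⁻¹ - u i₀) * p i₀
  have hτ : ∀ i, (u i)⁻¹ - u i = τ / p i := fun i => eq_div_of_mul_eq (hp i).ne' (h i i₀)
  rcases lt_trichotomy τ 0 with hneg | hzero | hpos
  · exact Or.inr <| Or.inl fun i =>
      (inv_sub_self_neg_iff (hu i)).mp (hτ i ▸ div_neg_of_neg_of_pos hneg (hp i))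
  · exact Or.inl fun i => (inv_sub_self_eq_zero_iff (hu i)).mp (by rw [hτ i, hzero, zero_div])
  · exact Or.inr <| Or.inr fun i =>
      (inv_sub_self_pos_iff (hu i)).mp (hτ i ▸ div_pos hpos (hp i))

lemma prod_erase_eq_prod_mul_inv {ι M : Type*} [CommGroupWithZero M] [DecidableEq ι]
    {s : Finset ι} {a : ι} (f : ι → M) (h : a ∈ s) (ha : f a ≠ 0) :
    ∏ x ∈ s.erase a, f x = (∏ x ∈ s, f x) * (f a)⁻¹ := by
  rw [← Finset.mul_prod_erase s f h, mul_comm (f a), mul_inv_cancel_right₀ ha]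

variable {n : ℕ}

lemma cfun_eq_cfun_iff {u p : Fin n → ℝ} {i j : Fin n} :
    cfun u p i = cfun u p j ↔ ((u i)⁻¹ - u i) * p i = ((u j)⁻¹ - u j) * p j := by
  unfold cfun
  constructor <;> intro h <;> linarith

lemma cfun_of_forall_eq_one {u : Fin n → ℝ} (h : ∀ i, u i = 1) (q : Fin n → ℝ) (i : Fin n) :
    cfun u q i = 1 - 2 * ∑ k, q k := by
  simp [cfun, h]

lemma Dfun_of_forall_eq_one (hn : 2 ≤ n) {u : Fin n → ℝ} (h : ∀ i, u i = 1) : Dfun u = 0 := by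
  refine Finset.sum_eq_zero fun j _ => ?_
  obtain ⟨k, hk⟩ : (Finset.univ.erase j).Nonempty := by
    rw [← Finset.card_pos, Finset.card_erase_of_mem (Finset.mem_univ j), Finset.card_fin]
    omega
  exact Finset.prod_eq_zero hk (by simp [h])

section NonzeroFactors

variable {u : Fin n → ℝ} (hu : ∀ k, (u k)⁻¹ - u k ≠ 0)
include hu

lemma Dfun_eq_prod_mul_sum_inv :
    Dfun u = (∏ k, ((u k)⁻¹ - u k)) * ∑ j, ((u j)⁻¹ - u j)⁻¹ := by
  rw [Dfun, Finset.mul_sum]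
  exact Finset.sum_congr rfl fun j _ => prod_erase_eq_prod_mul_inv _ (Finset.mem_univ j) (hu j)

lemma lamfun_eq_div :
    lamfun u = (∑ j, u j / (1 + u j) - 1 / 2) / ∑ j, ((u j)⁻¹ - u j)⁻¹ := by
  have hprod : ∏ k, ((u k)⁻¹ - u k) ≠ 0 := Finset.prod_ne_zero_iff.mpr fun k _ => hu k
  have hnum : ∑ j, (1 - u j) * ∏ k ∈ Finset.univ.erase j, ((u k)⁻¹ - u k) =
      (∏ k, ((u k)⁻¹ - u k)) * ∑ j, u j / (1 + u j) := by
    rw [Finset.mul_sum]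
    refine Finset.sum_congr rfl fun j _ => ?_
    rw [prod_erase_eq_prod_mul_inv _ (Finset.mem_univ j) (hu j),
      ← one_sub_div_inv_sub_self (hu j)]
    ring
  rw [lamfun, Dfun_eq_prod_mul_sum_inv hu, hnum]
  linear_combination ((∑ j, ((u j)⁻¹ - u j)⁻¹)⁻¹ * (∑ j, u j / (1 + u j) - 1 / 2)) *
    inv_mul_cancel₀ hprod

end NonzeroFactors

section SameSide

variable [NeZero n] {u : Fin n → ℝ}

lemma sum_inv_inv_sub_self_neg_of_forall_one_lt (h : ∀ i, 1 < u i) :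
    ∑ j, ((u j)⁻¹ - u j)⁻¹ < 0 :=
  Finset.sum_neg (fun j _ => inv_lt_zero.mpr (inv_sub_self_neg_of_one_lt (h j)))
    Finset.univ_nonempty

lemma Dfun_ne_zero_of_forall_one_lt (h : ∀ i, 1 < u i) : Dfun u ≠ 0 := by
  have ha : ∀ k, (u k)⁻¹ - u k ≠ 0 := fun k => (inv_sub_self_neg_of_one_lt (h k)).ne
  rw [Dfun_eq_prod_mul_sum_inv ha]
  exact mul_ne_zero (Finset.prod_ne_zero_iff.mpr fun k _ => ha k)
    (sum_inv_inv_sub_self_neg_of_forall_one_lt h).ne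

lemma lamfun_neg_of_forall_one_lt (h : ∀ i, 1 < u i) : lamfun u < 0 := by
  have ha : ∀ k, (u k)⁻¹ - u k ≠ 0 := fun k => (inv_sub_self_neg_of_one_lt (h k)).ne
  have hnum : 1 / 2 < ∑ j, u j / (1 + u j) := by
    have hnonneg : ∀ j, 0 ≤ u j / (1 + u j) := fun j =>
      div_nonneg (by linarith [h j]) (by linarith [h j])
    calc (1 : ℝ) / 2 < u 0 / (1 + u 0) := half_lt_div_one_add (h 0)
      _ ≤ ∑ j, u j / (1 + u j) :=
        Finset.single_le_sum (fun j _ => hnonneg j) (Finset.mem_univ 0)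
  rw [lamfun_eq_div ha]
  exact div_neg_of_pos_of_neg (by linarith) (sum_inv_inv_sub_self_neg_of_forall_one_lt h)

lemma Dfun_pos_of_forall_lt_one (hu : ∀ i, 0 < u i) (h : ∀ i, u i < 1) : 0 < Dfun u :=
  Finset.sum_pos (fun _ _ => Finset.prod_pos fun k _ => (inv_sub_self_pos_iff (hu k)).mpr (h k))
    Finset.univ_nonempty

end SameSide

end Cogrowth

theorem statement9_general (n : ℕ) (hn : 2 ≤ n) (u : Fin n → ℝ) (hu : ∀ i, 0 < u i)
    (p : Fin n → ℝ) (hp : ∀ i, 0 < p i)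
    (hsol : ∀ i j, Cogrowth.cfun u p i = Cogrowth.cfun u p j) :
    ((∀ i, u i = 1) ∨ (∀ i, 1 < u i) ∨ (∀ i, u i < 1)) ∧
    ((∀ i, u i = 1) → Cogrowth.Dfun u = 0 ∧
      ∀ q : Fin n → ℝ, (∑ i, q i = 1 / 2) → ∀ i, Cogrowth.cfun u q i = 0) ∧
    ((∀ i, 1 < u i) → Cogrowth.Dfun u ≠ 0 ∧ Cogrowth.lamfun u < 0) ∧
    ((∀ i, u i < 1) → Cogrowth.Dfun u ≠ 0) := by
  have : NeZero n := ⟨by omega⟩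
  refine ⟨Cogrowth.forall_eq_one_or_forall_one_lt_or_forall_lt_one hu hp
      fun i j => Cogrowth.cfun_eq_cfun_iff.mp (hsol i j),
    fun h => ⟨Cogrowth.Dfun_of_forall_eq_one hn h, ?_⟩,
    fun h => ⟨Cogrowth.Dfun_ne_zero_of_forall_one_lt h, Cogrowth.lamfun_neg_of_forall_one_lt h⟩,
    fun h => (Cogrowth.Dfun_pos_of_forall_lt_one hu h).ne'⟩
  intro q hq i
  rw [Cogrowth.cfun_of_forall_eq_one h, hq]
  norm_num

/-- trichotomy for positive solutions of the system. -/
theorem statement9 (n : ℕ) (hn : 2 ≤ n) (u : Fin n → ℝ) (hu : ∀ i, 0 < u i)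
    (p : Fin n → ℝ) (hp : ∀ i, 0 < p i) (hpsum : ∑ i, p i = 1 / 2)
    (hsol : ∀ i j, Cogrowth.cfun u p i = Cogrowth.cfun u p j) :
    ((∀ i, u i = 1) ∨ (∀ i, 1 < u i) ∨ (∀ i, u i < 1)) ∧
    ((∀ i, u i = 1) → Cogrowth.Dfun u = 0 ∧
      ∀ q : Fin n → ℝ, (∑ i, q i = 1 / 2) → ∀ i, Cogrowth.cfun u q i = 0) ∧
    ((∀ i, 1 < u i) → Cogrowth.Dfun u ≠ 0 ∧ Cogrowth.lamfun u < 0) ∧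
    ((∀ i, u i < 1) → Cogrowth.Dfun u ≠ 0) :=
  statement9_general n hn u hu p hp hsol
end

section
/- For every r ∈ ℛ, there exists a unique s > 0 such that l(H(r,s)) = 0, and this unique s equals the Poincaré exponent δ(r) of F_n. -/
open Filter

/-!
For `u = H(r,s)` put `φ(u) = Σ_i 2 u_i / (1 + u_i)`. Then `l(u) = (φ(u) - 1) ∏_i (1 + u_i)`, and
`s ↦ φ(H(r,s))` decreases strictly from `n` at `s = 0` to below `1` at `s = 1`, so `l(H(r,·))`
has exactly one positive zero `t`.

Grouping the Poincaré series `Σ_g exp(-s ℓ_r(g))` by word length gives `Σ_m T_m`, where `T_m` sums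
`∏ u` over the reduced words of length `m`. Splitting by the first letter, the weight `W_x(m+1)`
of the words starting with `x` satisfies `W_x(m+1) = u_x (T_m - W_{x⁻¹}(m))`, which yields
`T_m ≤ 2 φ^m` when `φ ≤ 1` and `T_m ≥ φ^m` when `φ ≥ 1`. So the series converges exactly for
`s > t`, and the exponential growth rate `δ(r)` of `#{ℓ_r ≤ R}` is the abscissa of convergence of
the series, that is `t`.
-/

open Real Topology

section GrowthRate

variable {α : Type*}

noncomputable def growthRate (ℓ : α → ℝ) : ℝ :=
  limsup (fun R : ℝ => log (Nat.card {a // ℓ a ≤ R}) / R) atTop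

variable {ℓ : α → ℝ} {s : ℝ}

theorem finite_sublevel_of_summable (hs : 0 ≤ s) (h : Summable fun a => exp (-(s * ℓ a)))
    (R : ℝ) : {a | ℓ a ≤ R}.Finite := by
  have hsmall := h.tendsto_cofinite_zero.eventually (gt_mem_nhds (exp_pos (-(s * R))))
  refine (eventually_cofinite.mp hsmall).subset fun a ha => ?_
  simp only [Set.mem_ofPred_eq, not_lt, exp_le_exp, neg_le_neg_iff] at ha ⊢
  exact mul_le_mul_of_nonneg_left ha hs

theorem card_sublevel_le_of_summable (hs : 0 ≤ s) (h : Summable fun a => exp (-(s * ℓ a)))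
    (R : ℝ) : (Nat.card {a // ℓ a ≤ R} : ℝ) ≤ exp (s * R) * ∑' a, exp (-(s * ℓ a)) := by
  have hfin := finite_sublevel_of_summable hs h R
  rw [show Nat.card {a // ℓ a ≤ R} = hfin.toFinset.card from
    Nat.card_eq_card_finite_toFinset hfin]
  calc (hfin.toFinset.card : ℝ) = ∑ _a ∈ hfin.toFinset, exp (s * R) * exp (-(s * R)) := by
        simp [← exp_add]
    _ ≤ ∑ a ∈ hfin.toFinset, exp (s * R) * exp (-(s * ℓ a)) := by
        refine Finset.sum_le_sum fun a ha => ?_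
        rw [Set.Finite.mem_toFinset] at ha
        gcongr
        exact ha
    _ = exp (s * R) * ∑ a ∈ hfin.toFinset, exp (-(s * ℓ a)) := (Finset.mul_sum ..).symm
    _ ≤ exp (s * R) * ∑' a, exp (-(s * ℓ a)) := by
        gcongr
        exact h.sum_le_tsum _ fun a _ => (exp_pos _).le

theorem eventually_log_card_div_le (hs : 0 ≤ s) (h : Summable fun a => exp (-(s * ℓ a))) :
    ∀ᶠ R in atTop, log (Nat.card {a // ℓ a ≤ R}) / R
      ≤ s + log (1 + ∑' a, exp (-(s * ℓ a))) / R := by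
  set S := ∑' a, exp (-(s * ℓ a))
  have hS : 0 ≤ S := tsum_nonneg fun _ => (exp_pos _).le
  filter_upwards [eventually_gt_atTop 0] with R hR
  rw [add_div' _ _ _ hR.ne', div_le_div_iff_of_pos_right hR]
  rcases (Nat.card {a // ℓ a ≤ R}).eq_zero_or_pos with h0 | hpos
  · rw [h0, Nat.cast_zero, log_zero]
    have := log_nonneg (le_add_of_nonneg_right hS)
    positivity
  · calc log (Nat.card {a // ℓ a ≤ R}) ≤ log (exp (s * R) * (1 + S)) := by
          refine log_le_log (by exact_mod_cast hpos) ?_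
          refine (card_sublevel_le_of_summable hs h R).trans ?_
          gcongr
          linarith
      _ = s * R + log (1 + S) := by rw [log_mul (exp_pos _).ne' (by positivity), log_exp]

theorem tendsto_add_div_atTop (a c : ℝ) : Tendsto (fun R : ℝ => a + c / R) atTop (𝓝 a) := by
  simpa using tendsto_const_nhds.add (tendsto_const_nhds (x := c).div_atTop tendsto_id)

theorem isBoundedUnder_log_card_div (hs : 0 ≤ s) (h : Summable fun a => exp (-(s * ℓ a))) :
    IsBoundedUnder (· ≤ ·) atTop fun R : ℝ => log (Nat.card {a // ℓ a ≤ R}) / R :=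
  (tendsto_add_div_atTop _ _).isBoundedUnder_le.mono_le (eventually_log_card_div_le hs h)

theorem growthRate_le_of_summable (hs : 0 ≤ s) (h : Summable fun a => exp (-(s * ℓ a))) :
    growthRate ℓ ≤ s := by
  have hlim := tendsto_add_div_atTop s (log (1 + ∑' a, exp (-(s * ℓ a))))
  have hbelow : IsBoundedUnder (· ≥ ·) atTop fun R : ℝ => log (Nat.card {a // ℓ a ≤ R}) / R :=
    isBoundedUnder_of_eventually_ge <| (eventually_ge_atTop 0).mono fun R hR =>
      div_nonneg (log_natCast_nonneg _) hR
  exact (limsup_le_limsup (eventually_log_card_div_le hs h) hbelow.isCoboundedUnder_le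
    hlim.isBoundedUnder_le).trans_eq hlim.limsup_eq

theorem sum_exp_le_sum_card_mul_exp (hs : 0 ≤ s) (hℓ : ∀ a, 0 ≤ ℓ a)
    (hfin : ∀ R, {a | ℓ a ≤ R}.Finite) (F : Finset α) (K : ℕ) (hK : ∀ a ∈ F, ℓ a < K) :
    ∑ a ∈ F, exp (-(s * ℓ a))
      ≤ ∑ k ∈ Finset.range K, (Nat.card {a // ℓ a ≤ k + 1} : ℝ) * exp (-(s * k)) := by
  classical
  rw [← Finset.sum_fiberwise_of_maps_to (g := fun a => ⌊ℓ a⌋₊)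
    fun a ha => Finset.mem_range.2 ((Nat.floor_lt (hℓ a)).2 (hK a ha))]
  refine Finset.sum_le_sum fun k _ => ?_
  have hcard : (F.filter fun a => ⌊ℓ a⌋₊ = k).card ≤ Nat.card {a // ℓ a ≤ k + 1} := by
    rw [show Nat.card {a // ℓ a ≤ k + 1} = (hfin (k + 1)).toFinset.card from
      Nat.card_eq_card_finite_toFinset (hfin _)]
    refine Finset.card_le_card fun a ha => ?_
    rw [Set.Finite.mem_toFinset, Set.mem_ofPred_eq, ← (Finset.mem_filter.1 ha).2]
    exact (Nat.lt_floor_add_one _).le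
  calc ∑ a ∈ F with ⌊ℓ a⌋₊ = k, exp (-(s * ℓ a))
      ≤ ∑ a ∈ F with ⌊ℓ a⌋₊ = k, exp (-(s * k)) := by
        refine Finset.sum_le_sum fun a ha => ?_
        rw [← (Finset.mem_filter.1 ha).2]
        gcongr
        exact Nat.floor_le (hℓ a)
    _ ≤ (Nat.card {a // ℓ a ≤ k + 1} : ℝ) * exp (-(s * k)) := by
        rw [Finset.sum_const, nsmul_eq_mul]
        gcongr

theorem exists_card_sublevel_le_of_growthRate_lt (hfin : ∀ R, {a | ℓ a ≤ R}.Finite)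
    (hbdd : IsBoundedUnder (· ≤ ·) atTop fun R : ℝ => log (Nat.card {a // ℓ a ≤ R}) / R)
    (hs : 0 ≤ s) (hlt : growthRate ℓ < s) :
    ∃ C, ∀ R, 0 ≤ R → (Nat.card {a // ℓ a ≤ R} : ℝ) ≤ C * exp (s * R) := by
  obtain ⟨R₀, hR₀⟩ := eventually_atTop.1
    ((eventually_lt_of_limsup_lt hlt hbdd).and (eventually_gt_atTop 0))
  have hlarge : ∀ R, R₀ ≤ R → (Nat.card {a // ℓ a ≤ R} : ℝ) ≤ exp (s * R) := fun R hR =>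
    (le_exp_log _).trans <| exp_le_exp.2 <| by
      obtain ⟨hlog, hpos⟩ := hR₀ R hR
      exact ((div_lt_iff₀ hpos).1 hlog).le
  have hR₀pos := (hR₀ R₀ le_rfl).2
  refine ⟨exp (s * R₀), fun R hR => ?_⟩
  rcases le_total R₀ R with h | h
  · exact (hlarge R h).trans
      (le_mul_of_one_le_left (exp_pos _).le (one_le_exp (by positivity)))
  · have hmono : Nat.card {a // ℓ a ≤ R} ≤ Nat.card {a // ℓ a ≤ R₀} :=
      Nat.card_mono (hfin R₀) fun a ha => le_trans ha h
    calc (Nat.card {a // ℓ a ≤ R} : ℝ) ≤ Nat.card {a // ℓ a ≤ R₀} := by exact_mod_cast hmono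
      _ ≤ exp (s * R₀) := hlarge R₀ le_rfl
      _ ≤ exp (s * R₀) * exp (s * R) :=
          le_mul_of_one_le_right (exp_pos _).le (one_le_exp (by positivity))

theorem summable_of_growthRate_lt (hℓ : ∀ a, 0 ≤ ℓ a) {s₀ : ℝ} (hs₀ : 0 ≤ s₀)
    (h₀ : Summable fun a => exp (-(s₀ * ℓ a))) (hs : 0 < s) (hlt : growthRate ℓ < s) :
    Summable fun a => exp (-(s * ℓ a)) := by
  obtain ⟨s', hs', hs's⟩ := exists_between (max_lt hlt hs)
  have hfin := finite_sublevel_of_summable hs₀ h₀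
  obtain ⟨C, hC⟩ := exists_card_sublevel_le_of_growthRate_lt hfin
    (isBoundedUnder_log_card_div hs₀ h₀) (le_of_max_le_right hs'.le) (max_lt_iff.1 hs').1
  set q := exp (s' - s)
  have hq : q < 1 := exp_lt_one_iff.2 (by linarith)
  refine summable_of_sum_le (c := C * exp s' * (1 - q)⁻¹) (fun a => (exp_pos _).le) fun F => ?_
  obtain ⟨M, hM⟩ := (F.image ℓ).bddAbove
  obtain ⟨K, hK⟩ := exists_nat_gt M
  have hFK : ∀ a ∈ F, ℓ a < K := fun a ha => (hM (Finset.mem_image_of_mem ℓ ha)).trans_lt hK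
  calc ∑ a ∈ F, exp (-(s * ℓ a))
      ≤ ∑ k ∈ Finset.range K, (Nat.card {a // ℓ a ≤ k + 1} : ℝ) * exp (-(s * k)) :=
        sum_exp_le_sum_card_mul_exp hs.le hℓ hfin F K hFK
    _ ≤ ∑ k ∈ Finset.range K, C * exp s' * q ^ k := by
        refine Finset.sum_le_sum fun k _ => ?_
        calc (Nat.card {a // ℓ a ≤ k + 1} : ℝ) * exp (-(s * k))
            ≤ C * exp (s' * (k + 1)) * exp (-(s * k)) := by gcongr; exact hC _ (by positivity)
          _ = C * exp s' * q ^ k := by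
            rw [← exp_nat_mul, mul_assoc, mul_assoc, ← exp_add, ← exp_add]
            ring_nf
    _ = C * exp s' * ∑ k ∈ Finset.Ico 0 K, q ^ k := by rw [Finset.mul_sum, Finset.range_eq_Ico]
    _ ≤ C * exp s' * (1 - q)⁻¹ := by
        have hC0 : 0 ≤ C := (Nat.cast_nonneg _).trans (by simpa using hC 0 le_rfl)
        gcongr
        simpa [div_eq_mul_inv] using geom_sum_Ico_le_of_lt_one (m := 0) (n := K) (exp_pos _).le hq

theorem growthRate_eq_of_summable_iff (hℓ : ∀ a, 0 ≤ ℓ a) {t : ℝ} (ht : 0 < t)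
    (h : ∀ s, 0 < s → ((Summable fun a => exp (-(s * ℓ a))) ↔ t < s)) : growthRate ℓ = t := by
  have hsum : ∀ s, t < s → Summable fun a => exp (-(s * ℓ a)) :=
    fun s hs => (h s (ht.trans hs)).2 hs
  refine le_antisymm (le_of_forall_gt_imp_ge_of_dense fun s hs =>
    growthRate_le_of_summable (ht.trans hs).le (hsum s hs)) (not_lt.1 fun hlt => ?_)
  obtain ⟨s, hs, hst⟩ := exists_between (max_lt hlt ht)
  have hs0 : 0 < s := (le_max_right _ _).trans_lt hs
  exact hst.not_gt <| (h s hs0).1 <| summable_of_growthRate_lt hℓ (by linarith)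
    (hsum (t + 1) (by linarith)) hs0 (max_lt_iff.1 hs).1

end GrowthRate

namespace Cogrowth

variable {n : ℕ}

open Classical in
noncomputable def reducedWords (n m : ℕ) : Finset (List (Fin n × Bool)) :=
  (List.finite_length_eq (Fin n × Bool) m).toFinset.filter FreeGroup.IsReduced

theorem mem_reducedWords {m : ℕ} {l : List (Fin n × Bool)} :
    l ∈ reducedWords n m ↔ l.length = m ∧ FreeGroup.IsReduced l := by
  simp [reducedWords]

theorem reducedWords_zero : reducedWords n 0 = {[]} := by
  ext l
  simp only [mem_reducedWords, List.length_eq_zero_iff, Finset.mem_singleton, and_iff_left_iff_imp]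
  rintro rfl
  exact FreeGroup.IsReduced.nil

theorem isReduced_cons_iff {x : Fin n × Bool} {l : List (Fin n × Bool)} :
    FreeGroup.IsReduced (x :: l) ↔ FreeGroup.IsReduced l ∧ l.head? ≠ some (x.1, !x.2) := by
  rw [FreeGroup.IsReduced, List.isChain_cons, ← FreeGroup.IsReduced, and_comm]
  refine and_congr_right fun _ => ?_
  rcases l with _ | ⟨⟨j, c⟩, l⟩
  · simp
  · obtain ⟨i, b⟩ := x
    simp only [List.head?_cons, Option.mem_def, Option.some.injEq, forall_eq', ne_eq, Prod.mk.injEq]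
    cases b <;> cases c <;> grind

theorem filter_head_reducedWords_succ (x : Fin n × Bool) (m : ℕ) :
    (reducedWords n (m + 1)).filter (·.head? = some x)
      = ((reducedWords n m).filter (·.head? ≠ some (x.1, !x.2))).map
          ⟨List.cons x, List.cons_injective⟩ := by
  ext l
  rcases l with _ | ⟨y, t⟩
  · simp
  · simp only [Finset.mem_filter, mem_reducedWords, Finset.mem_map, Function.Embedding.coeFn_mk,
      List.cons.injEq, List.head?_cons, Option.some.injEq, List.length_cons]
    constructor
    · rintro ⟨⟨hlen, hred⟩, rfl⟩
      obtain ⟨hred', hhead⟩ := isReduced_cons_iff.1 hred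
      exact ⟨t, ⟨⟨by omega, hred'⟩, hhead⟩, rfl, rfl⟩
    · rintro ⟨t, ⟨⟨rfl, hred⟩, hhead⟩, rfl, rfl⟩
      exact ⟨⟨rfl, isReduced_cons_iff.2 ⟨hred, hhead⟩⟩, rfl⟩

theorem mem_image_mk_reducedWords {m : ℕ} {g : FreeGroup (Fin n)} :
    g ∈ (reducedWords n m).image FreeGroup.mk ↔ g.toWord.length = m := by
  simp only [Finset.mem_image, mem_reducedWords]
  constructor
  · rintro ⟨l, ⟨rfl, hl⟩, rfl⟩
    rw [FreeGroup.toWord_mk, hl.reduce_eq]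
  · rintro rfl
    exact ⟨g.toWord, ⟨rfl, FreeGroup.isReduced_toWord⟩, FreeGroup.mk_toWord⟩

section Weights

variable (u : Fin n → ℝ)

noncomputable def wordWeight (l : List (Fin n × Bool)) : ℝ := (l.map fun x => u x.1).prod

noncomputable def sphereWeight (m : ℕ) : ℝ := ∑ l ∈ reducedWords n m, wordWeight u l

noncomputable def coneWeight (x : Fin n × Bool) (m : ℕ) : ℝ :=
  ∑ l ∈ reducedWords n m with l.head? = some x, wordWeight u l

noncomputable def ratio (i : Fin n) : ℝ := u i / (1 + u i)

noncomputable def phi : ℝ := ∑ x : Fin n × Bool, ratio u x.1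

@[simp] theorem wordWeight_cons (x : Fin n × Bool) (l : List (Fin n × Bool)) :
    wordWeight u (x :: l) = u x.1 * wordWeight u l := by
  simp [wordWeight]

@[simp] theorem sphereWeight_zero : sphereWeight u 0 = 1 := by
  simp [sphereWeight, reducedWords_zero, wordWeight]

@[simp] theorem coneWeight_zero (x : Fin n × Bool) : coneWeight u x 0 = 0 := by
  simp [coneWeight, reducedWords_zero, Finset.filter_singleton]

theorem sphereWeight_succ (m : ℕ) : sphereWeight u (m + 1) = ∑ x, coneWeight u x (m + 1) := by
  have hnone : (reducedWords n (m + 1)).filter (·.head? = none) = ∅ :=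
    Finset.filter_eq_empty_iff.2 fun l hl hnil => by
      rw [List.head?_eq_none_iff] at hnil
      simp [mem_reducedWords, hnil] at hl
  rw [sphereWeight, ← Finset.sum_fiberwise_of_maps_to (g := List.head?) (t := Finset.univ)
    fun _ _ => Finset.mem_univ _, Fintype.sum_option, hnone, Finset.sum_empty, zero_add]
  rfl

theorem coneWeight_succ (x : Fin n × Bool) (m : ℕ) :
    coneWeight u x (m + 1) = u x.1 * (sphereWeight u m - coneWeight u (x.1, !x.2) m) := by
  rw [sphereWeight, coneWeight, coneWeight, ← Finset.sum_filter_add_sum_filter_not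
    (reducedWords n m) (·.head? = some (x.1, !x.2)), add_sub_cancel_left,
    filter_head_reducedWords_succ, Finset.sum_map, Finset.mul_sum]
  simp

theorem coneWeight_one (x : Fin n × Bool) : coneWeight u x 1 = u x.1 := by
  simp [coneWeight_succ u x 0]

theorem coneWeight_succ_succ (x : Fin n × Bool) (m : ℕ) :
    coneWeight u x (m + 2)
      = u x.1 * ∑ y ∈ Finset.univ.erase (x.1, !x.2), coneWeight u y (m + 1) := by
  rw [coneWeight_succ, sphereWeight_succ, Finset.sum_erase_eq_sub (Finset.mem_univ _)]

theorem phi_eq_two_mul_sum : phi u = 2 * ∑ i, ratio u i := by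
  rw [phi, Fintype.sum_prod_type, Finset.mul_sum]
  simp [two_mul]

theorem sum_erase_ratio (x : Fin n × Bool) :
    ∑ y ∈ Finset.univ.erase (x.1, !x.2), ratio u y.1 = phi u - ratio u x.1 := by
  rw [Finset.sum_erase_eq_sub (Finset.mem_univ _)]
  rfl

end Weights

variable {u : Fin n → ℝ}

theorem wordWeight_nonneg (hu : ∀ i, 0 ≤ u i) (l : List (Fin n × Bool)) : 0 ≤ wordWeight u l :=
  List.prod_nonneg fun _ hx => by
    obtain ⟨x, -, rfl⟩ := List.mem_map.1 hx
    exact hu x.1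

theorem ratio_nonneg (hu : ∀ i, 0 ≤ u i) (i : Fin n) : 0 ≤ ratio u i :=
  div_nonneg (hu i) (by linarith [hu i])

theorem phi_nonneg (hu : ∀ i, 0 ≤ u i) : 0 ≤ phi u :=
  Finset.sum_nonneg fun x _ => ratio_nonneg hu x.1

theorem lfun_eq_phi_sub_one_mul (hu : ∀ i, 0 ≤ u i) :
    lfun u = (phi u - 1) * ∏ i, (1 + u i) := by
  have hterm : ∀ j, u j * ∏ k ∈ Finset.univ.erase j, (1 + u k) = ratio u j * ∏ i, (1 + u i) := by
    intro j
    have : 1 + u j ≠ 0 := by linarith [hu j]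
    rw [← Finset.mul_prod_erase _ (fun k => 1 + u k) (Finset.mem_univ j), ratio]
    field_simp
  rw [lfun, Finset.sum_congr rfl fun j _ => hterm j, ← Finset.sum_mul, phi_eq_two_mul_sum]
  ring

-- Applied to `ratio u`, the recursion of `coneWeight_succ_succ` returns `phi u * ratio u` plus
-- an error term with the sign of `phi u - 1`.
theorem mul_phi_sub_ratio (hu : ∀ i, 0 ≤ u i) (i : Fin n) :
    u i * (phi u - ratio u i) = phi u * ratio u i + (phi u - 1) * (u i * ratio u i) := by
  have : 1 + u i ≠ 0 := by linarith [hu i]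
  rw [ratio]
  field_simp
  ring

theorem coneWeight_le (hu0 : ∀ i, 0 ≤ u i) (hu1 : ∀ i, u i ≤ 1) (hphi : phi u ≤ 1) (m : ℕ)
    (x : Fin n × Bool) : coneWeight u x (m + 1) ≤ 2 * phi u ^ m * ratio u x.1 := by
  induction m generalizing x with
  | zero =>
    rw [coneWeight_one, pow_zero, mul_one, ratio, mul_div_assoc',
      le_div_iff₀ (by linarith [hu0 x.1])]
    nlinarith [hu0 x.1, hu1 x.1]
  | succ m ih =>
    have hsum := Finset.sum_le_sum fun y (_ : y ∈ Finset.univ.erase (x.1, !x.2)) => ih y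
    rw [← Finset.mul_sum, sum_erase_ratio] at hsum
    have hneg : (phi u - 1) * (u x.1 * ratio u x.1) ≤ 0 :=
      mul_nonpos_of_nonpos_of_nonneg (by linarith) (mul_nonneg (hu0 _) (ratio_nonneg hu0 _))
    have := phi_nonneg hu0
    calc coneWeight u x (m + 2)
        = u x.1 * ∑ y ∈ Finset.univ.erase (x.1, !x.2), coneWeight u y (m + 1) :=
          coneWeight_succ_succ u x m
      _ ≤ u x.1 * (2 * phi u ^ m * (phi u - ratio u x.1)) := by gcongr; exact hu0 _
      _ = 2 * phi u ^ m * (phi u * ratio u x.1 + (phi u - 1) * (u x.1 * ratio u x.1)) := by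
          rw [← mul_phi_sub_ratio hu0]; ring
      _ ≤ 2 * phi u ^ m * (phi u * ratio u x.1 + 0) := by gcongr
      _ = 2 * phi u ^ (m + 1) * ratio u x.1 := by ring

theorem le_coneWeight (hu0 : ∀ i, 0 ≤ u i) (hphi : 1 ≤ phi u) (m : ℕ) (x : Fin n × Bool) :
    phi u ^ m * ratio u x.1 ≤ coneWeight u x (m + 1) := by
  induction m generalizing x with
  | zero =>
    rw [coneWeight_one, pow_zero, one_mul]
    exact div_le_self (hu0 _) (le_add_of_nonneg_right (hu0 _))
  | succ m ih =>
    have hsum := Finset.sum_le_sum fun y (_ : y ∈ Finset.univ.erase (x.1, !x.2)) => ih y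
    rw [← Finset.mul_sum, sum_erase_ratio] at hsum
    have hpos : 0 ≤ (phi u - 1) * (u x.1 * ratio u x.1) :=
      mul_nonneg (by linarith) (mul_nonneg (hu0 _) (ratio_nonneg hu0 _))
    have := phi_nonneg hu0
    calc phi u ^ (m + 1) * ratio u x.1
        = phi u ^ m * (phi u * ratio u x.1 + 0) := by ring
      _ ≤ phi u ^ m * (phi u * ratio u x.1 + (phi u - 1) * (u x.1 * ratio u x.1)) := by gcongr
      _ = phi u ^ m * (u x.1 * (phi u - ratio u x.1)) := by rw [mul_phi_sub_ratio hu0]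
      _ = u x.1 * (phi u ^ m * (phi u - ratio u x.1)) := by ring
      _ ≤ u x.1 * ∑ y ∈ Finset.univ.erase (x.1, !x.2), coneWeight u y (m + 1) := by
          gcongr; exact hu0 _
      _ = coneWeight u x (m + 2) := (coneWeight_succ_succ u x m).symm

theorem sphereWeight_le (hu0 : ∀ i, 0 ≤ u i) (hu1 : ∀ i, u i ≤ 1) (hphi : phi u ≤ 1) (m : ℕ) :
    sphereWeight u m ≤ 2 * phi u ^ m := by
  cases m with
  | zero => norm_num
  | succ m =>
    calc sphereWeight u (m + 1) = ∑ x, coneWeight u x (m + 1) := sphereWeight_succ u m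
      _ ≤ ∑ x : Fin n × Bool, 2 * phi u ^ m * ratio u x.1 :=
          Finset.sum_le_sum fun x _ => coneWeight_le hu0 hu1 hphi m x
      _ = 2 * phi u ^ (m + 1) := by rw [← Finset.mul_sum, ← phi, pow_succ, mul_assoc]

theorem le_sphereWeight (hu0 : ∀ i, 0 ≤ u i) (hphi : 1 ≤ phi u) (m : ℕ) :
    phi u ^ m ≤ sphereWeight u m := by
  cases m with
  | zero => norm_num
  | succ m =>
    calc phi u ^ (m + 1) = ∑ x : Fin n × Bool, phi u ^ m * ratio u x.1 := by
          rw [← Finset.mul_sum, ← phi, pow_succ]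
      _ ≤ ∑ x, coneWeight u x (m + 1) := Finset.sum_le_sum fun x _ => le_coneWeight hu0 hphi m x
      _ = sphereWeight u (m + 1) := (sphereWeight_succ u m).symm

theorem summable_sphereWeight_iff (hu0 : ∀ i, 0 ≤ u i) (hu1 : ∀ i, u i ≤ 1) :
    Summable (sphereWeight u) ↔ phi u < 1 := by
  refine ⟨fun h => not_le.1 fun hphi => ?_, fun hphi => ?_⟩
  · have := ge_of_tendsto' h.tendsto_atTop_zero fun m =>
      (one_le_pow₀ hphi).trans (le_sphereWeight hu0 hphi m)
    norm_num at this
  · exact Summable.of_nonneg_of_le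
      (fun m => Finset.sum_nonneg fun l _ => wordWeight_nonneg hu0 l)
      (sphereWeight_le hu0 hu1 hphi.le)
      ((summable_geometric_of_lt_one (phi_nonneg hu0) hphi).mul_left 2)

theorem summable_wordWeight_toWord_iff (hu : ∀ i, 0 ≤ u i) :
    Summable (fun g : FreeGroup (Fin n) => wordWeight u g.toWord) ↔ Summable (sphereWeight u) := by
  have hpart : ∀ g : FreeGroup (Fin n),
      ∃! m, g ∈ (((reducedWords n m).image FreeGroup.mk : Finset _) : Set _) := fun g =>
    ⟨g.toWord.length, Finset.mem_coe.2 (mem_image_mk_reducedWords.2 rfl),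
      fun _ hm => (mem_image_mk_reducedWords.1 (Finset.mem_coe.1 hm)).symm⟩
  have hsphere : ∀ m, ∑' g : (((reducedWords n m).image FreeGroup.mk : Finset (FreeGroup (Fin n)))
      : Set (FreeGroup (Fin n))),
      wordWeight u (g : FreeGroup (Fin n)).toWord = sphereWeight u m := by
    intro m
    have hred : ∀ l ∈ reducedWords n m, (FreeGroup.mk l).toWord = l := fun l hl => by
      rw [FreeGroup.toWord_mk, (mem_reducedWords.1 hl).2.reduce_eq]
    rw [Finset.tsum_subtype' _ fun g : FreeGroup (Fin n) => wordWeight u g.toWord,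
      Finset.sum_image fun l hl l' hl' h => by rw [← hred l hl, ← hred l' hl', h]]
    exact Finset.sum_congr rfl fun l hl => by rw [hred l hl]
  rw [summable_partition (fun g => wordWeight_nonneg hu _) hpart]
  simp only [hsphere]
  exact and_iff_right fun m => Summable.of_finite

variable {r : Fin n → ℝ}

theorem wordWeight_Hmap (hr : ∀ i, 0 < r i) (s : ℝ) (l : List (Fin n × Bool)) :
    wordWeight (Hmap r s) l = exp (-(s * (l.map fun x => -log (r x.1)).sum)) := by
  induction l with
  | nil => simp [wordWeight]
  | cons x l ih =>
    rw [wordWeight_cons, ih, List.map_cons, List.sum_cons, Hmap, Real.rpow_def_of_pos (hr _),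
      ← exp_add]
    ring_nf

theorem summable_exp_wlen_iff (hr0 : ∀ i, 0 < r i) (hr1 : ∀ i, r i ≤ 1) {s : ℝ} (hs : 0 ≤ s) :
    (Summable fun g => exp (-(s * wlen r g))) ↔ phi (Hmap r s) < 1 := by
  simp only [wlen, ← wordWeight_Hmap hr0]
  exact (summable_wordWeight_toWord_iff fun i => (Real.rpow_pos_of_pos (hr0 i) s).le).trans
    (summable_sphereWeight_iff (fun i => (Real.rpow_pos_of_pos (hr0 i) s).le)
      fun i => Real.rpow_le_one (hr0 i).le (hr1 i) hs)

theorem wlen_nonneg (hr0 : ∀ i, 0 < r i) (hr1 : ∀ i, r i ≤ 1) (g : FreeGroup (Fin n)) :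
    0 ≤ wlen r g :=
  List.sum_nonneg fun _ hx => by
    obtain ⟨x, -, rfl⟩ := List.mem_map.1 hx
    exact neg_nonneg.2 (log_nonpos (hr0 _).le (hr1 _))

theorem delta_eq_growthRate : delta r = growthRate (wlen r) := by
  simp [delta, pexp, growthRate]

theorem one_add_Hmap_pos (hr0 : ∀ i, 0 < r i) (s : ℝ) (i : Fin n) : 0 < 1 + Hmap r s i :=
  add_pos_of_pos_of_nonneg one_pos (Real.rpow_nonneg (hr0 i).le s)

theorem phi_Hmap_strictAnti (hr0 : ∀ i, 0 < r i) (hr1 : ∀ i, r i < 1) (hn : 0 < n) :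
    StrictAnti fun s => phi (Hmap r s) := fun s₁ s₂ h => by
  refine Finset.sum_lt_sum_of_nonempty ⟨(⟨0, hn⟩, true), Finset.mem_univ _⟩ fun x _ => ?_
  have h₁ := Real.rpow_pos_of_pos (hr0 x.1) s₂
  have h₂ := Real.rpow_lt_rpow_of_exponent_gt (hr0 x.1) (hr1 x.1) h
  rw [ratio, ratio, div_lt_div_iff₀ (one_add_Hmap_pos hr0 _ _) (one_add_Hmap_pos hr0 _ _)]
  simp only [Hmap]
  nlinarith

theorem continuous_phi_Hmap (hr0 : ∀ i, 0 < r i) : Continuous fun s => phi (Hmap r s) := by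
  refine continuous_finsetSum _ fun x _ => ?_
  have hc : Continuous fun s : ℝ => r x.1 ^ s :=
    continuous_const.rpow continuous_id fun _ => Or.inl (hr0 x.1).ne'
  exact hc.div (continuous_const.add hc) fun s => (one_add_Hmap_pos hr0 s x.1).ne'

theorem phi_Hmap_zero : phi (Hmap r 0) = n := by
  simp only [phi, ratio, Hmap, rpow_zero, Finset.sum_const, Finset.card_univ, Fintype.card_prod,
    Fintype.card_fin, Fintype.card_bool, nsmul_eq_mul, Nat.cast_mul, Nat.cast_ofNat]
  ring

theorem phi_Hmap_one_lt (hr0 : ∀ i, 0 < r i) (hrsum : ∑ i, r i = 1 / 2) (hn : 0 < n) :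
    phi (Hmap r 1) < 1 := by
  rw [phi_eq_two_mul_sum]
  calc 2 * ∑ i, ratio (Hmap r 1) i < 2 * ∑ i, r i := by
        refine mul_lt_mul_of_pos_left (Finset.sum_lt_sum_of_nonempty
          ⟨⟨0, hn⟩, Finset.mem_univ _⟩ fun i _ => ?_) two_pos
        simp only [ratio, Hmap, Real.rpow_one]
        exact div_lt_self (hr0 i) (by linarith [hr0 i])
    _ = 1 := by rw [hrsum]; norm_num

theorem exists_phi_Hmap_eq_one (hn : 2 ≤ n) (hr0 : ∀ i, 0 < r i) (hrsum : ∑ i, r i = 1 / 2) :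
    ∃ t, 0 < t ∧ phi (Hmap r t) = 1 := by
  obtain ⟨t, ht, hphi⟩ := intermediate_value_Ioo' zero_le_one
    (continuous_phi_Hmap hr0).continuousOn
    ⟨phi_Hmap_one_lt hr0 hrsum (by omega), by rw [phi_Hmap_zero]; exact_mod_cast hn⟩
  exact ⟨t, ht.1, hphi⟩

end Cogrowth

/-- `δ(r)` is the unique `s > 0` with `l(H(r,s)) = 0`. -/
theorem statement10 (n : ℕ) (hn : 2 ≤ n) (r : Fin n → ℝ) (hr : ∀ i, 0 < r i)
    (hrsum : ∑ i, r i = 1 / 2) :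
    (0 < Cogrowth.delta r ∧ Cogrowth.lfun (Cogrowth.Hmap r (Cogrowth.delta r)) = 0) ∧
    ∀ s : ℝ, 0 < s → Cogrowth.lfun (Cogrowth.Hmap r s) = 0 → s = Cogrowth.delta r := by
  have hr1 : ∀ i, r i < 1 := fun i =>
    (Finset.single_le_sum (fun j _ => (hr j).le) (Finset.mem_univ i)).trans_lt
      (by rw [hrsum]; norm_num)
  have hanti := Cogrowth.phi_Hmap_strictAnti hr hr1 (by omega)
  obtain ⟨t, ht, hphi⟩ := Cogrowth.exists_phi_Hmap_eq_one hn hr hrsum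
  have hδ : Cogrowth.delta r = t := by
    rw [Cogrowth.delta_eq_growthRate]
    refine growthRate_eq_of_summable_iff (Cogrowth.wlen_nonneg hr fun i => (hr1 i).le) ht
      fun s hs => ?_
    rw [Cogrowth.summable_exp_wlen_iff hr (fun i => (hr1 i).le) hs.le, ← hphi, hanti.lt_iff_gt]
  have hroot : ∀ s, Cogrowth.lfun (Cogrowth.Hmap r s) = 0 ↔ s = t := fun s => by
    have hprod : ∏ i, (1 + Cogrowth.Hmap r s i) ≠ 0 :=
      Finset.prod_ne_zero_iff.2 fun i _ => (Cogrowth.one_add_Hmap_pos hr s i).ne'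
    rw [Cogrowth.lfun_eq_phi_sub_one_mul (u := Cogrowth.Hmap r s)
        fun i => (Real.rpow_pos_of_pos (hr i) s).le,
      mul_eq_zero, or_iff_left hprod, sub_eq_zero, ← hphi, hanti.injective.eq_iff]
  exact ⟨⟨hδ ▸ ht, (hroot _).2 hδ⟩, fun s _ hs => ((hroot s).1 hs).trans hδ.symm⟩
end

section
/- For every u = (u_1,…,u_n) ∈ (0,∞)^n with D(u) ≠ 0, one has the identity 2·(∏_{i=1}^n u_i)·D(u)·λ(u) = (∏_{j=1}^n (1 − u_j))·l(u). In particular, for u ∈ (0,1)^n, λ(u) = 0 if and only if l(u) = 0, and λ(u) and l(u) have the same sign. -/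
open Filter

/-!
Since `u (u⁻¹ - u) = (1 - u)(1 + u)`, multiplying `λ(u)` by `2 (∏ uᵢ) D(u)` clears its
denominators, and every term of the result factors through `∏ (1 - uⱼ)`. On `(0,1)ⁿ` the factors
`∏ uᵢ` and `∏ (1 - uⱼ)` are positive and `D(u)` is a sum of positive products, hence positive once
it is nonzero; so `λ(u)` is a positive multiple of `l(u)`.
-/

namespace Cogrowth

open Finset

lemma mul_inv_sub_self {a : ℝ} (ha : a ≠ 0) : a * (a⁻¹ - a) = (1 - a) * (1 + a) := by
  rw [mul_sub, mul_inv_cancel₀ ha]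
  ring

section Products

variable {ι : Type*} (u : ι → ℝ)

lemma prod_mul_prod_inv_sub (s : Finset ι) (hu : ∀ i ∈ s, u i ≠ 0) :
    (∏ i ∈ s, u i) * ∏ i ∈ s, ((u i)⁻¹ - u i) =
      (∏ i ∈ s, (1 - u i)) * ∏ i ∈ s, (1 + u i) := by
  rw [← prod_mul_distrib, ← prod_mul_distrib]
  exact prod_congr rfl fun i hi => mul_inv_sub_self (hu i hi)

variable [Fintype ι] [DecidableEq ι]

lemma prod_mul_sum_one_sub_mul_prod_erase_inv_sub (hu : ∀ i, u i ≠ 0) :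
    (∏ i, u i) * ∑ j, (1 - u j) * ∏ k ∈ univ.erase j, ((u k)⁻¹ - u k) =
      (∏ j, (1 - u j)) * ∑ j, u j * ∏ k ∈ univ.erase j, (1 + u k) := by
  rw [mul_sum, mul_sum]
  refine sum_congr rfl fun j _ => ?_
  have hj := prod_mul_prod_inv_sub u (univ.erase j) fun k _ => hu k
  rw [← mul_prod_erase univ u (mem_univ j), ← mul_prod_erase univ (fun k => 1 - u k) (mem_univ j)]
  linear_combination (1 - u j) * u j * hj

end Products

variable {n : ℕ} {u : Fin n → ℝ}

theorem two_mul_prod_mul_Dfun_mul_lamfun (hu : ∀ i, u i ≠ 0) (hD : Dfun u ≠ 0) :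
    2 * (∏ i, u i) * Dfun u * lamfun u = (∏ j, (1 - u j)) * lfun u := by
  have hsum := prod_mul_sum_one_sub_mul_prod_erase_inv_sub u hu
  have hfull := prod_mul_prod_inv_sub u univ fun i _ => hu i
  rw [lamfun, lfun, mul_assoc _ (Dfun u), mul_inv_cancel_left₀ hD]
  linear_combination 2 * hsum - hfull

lemma Dfun_nonneg (hu₀ : ∀ i, 0 < u i) (hu₁ : ∀ i, u i ≤ 1) : 0 ≤ Dfun u :=
  sum_nonneg fun _ _ => prod_nonneg fun k _ =>
    sub_nonneg.mpr ((hu₁ k).trans (one_le_inv₀ (hu₀ k) |>.mpr (hu₁ k)))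

end Cogrowth

lemma same_sign_of_mul_eq_mul {a b x y : ℝ} (ha : 0 < a) (hb : 0 < b) (h : a * x = b * y) :
    (x = 0 ↔ y = 0) ∧ (0 < x ↔ 0 < y) ∧ (x < 0 ↔ y < 0) := by
  refine ⟨?_, ?_, ?_⟩
  · rw [← mul_eq_zero_iff_left ha.ne', h, mul_eq_zero_iff_left hb.ne']
  · rw [← mul_pos_iff_of_pos_left ha, h, mul_pos_iff_of_pos_left hb]
  · rw [← neg_pos, ← neg_pos (a := y), ← mul_pos_iff_of_pos_left ha, mul_neg, h, ← mul_neg,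
      mul_pos_iff_of_pos_left hb]

theorem statement12_general (n : ℕ) (u : Fin n → ℝ) (hu : ∀ i, 0 < u i)
    (hD : Cogrowth.Dfun u ≠ 0) :
    2 * (∏ i, u i) * Cogrowth.Dfun u * Cogrowth.lamfun u =
      (∏ j, (1 - u j)) * Cogrowth.lfun u ∧
    ((∀ i, u i < 1) →
      (Cogrowth.lamfun u = 0 ↔ Cogrowth.lfun u = 0) ∧
      (0 < Cogrowth.lamfun u ↔ 0 < Cogrowth.lfun u) ∧
      (Cogrowth.lamfun u < 0 ↔ Cogrowth.lfun u < 0)) := by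
  have hid := Cogrowth.two_mul_prod_mul_Dfun_mul_lamfun (fun i => (hu i).ne') hD
  refine ⟨hid, fun hu₁ => same_sign_of_mul_eq_mul ?_ ?_ hid⟩
  · have hDpos : 0 < Cogrowth.Dfun u :=
      (Cogrowth.Dfun_nonneg hu fun i => (hu₁ i).le).lt_of_ne' hD
    have hprod : 0 < ∏ i, u i := Finset.prod_pos fun i _ => hu i
    positivity
  · exact Finset.prod_pos fun j _ => sub_pos.mpr (hu₁ j)

/-- `2 (∏ u_i) D(u) λ(u) = (∏ (1 - u_j)) l(u)`, and for `u ∈ (0,1)^n`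
the functions `λ` and `l` vanish together and have the same sign. -/
theorem statement12 (n : ℕ) (hn : 2 ≤ n) (u : Fin n → ℝ) (hu : ∀ i, 0 < u i)
    (hD : Cogrowth.Dfun u ≠ 0) :
    2 * (∏ i, u i) * Cogrowth.Dfun u * Cogrowth.lamfun u =
      (∏ j, (1 - u j)) * Cogrowth.lfun u ∧
    ((∀ i, u i < 1) →
      (Cogrowth.lamfun u = 0 ↔ Cogrowth.lfun u = 0) ∧
      (0 < Cogrowth.lamfun u ↔ 0 < Cogrowth.lfun u) ∧
      (Cogrowth.lamfun u < 0 ↔ Cogrowth.lfun u < 0)) :=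
  statement12_general n u hu hD
end

section
/- Fix p = (p_1,…,p_n) ∈ 𝒫 and define Λ_p(τ) = 1 − Σ_{i=1}^n √(τ² + 4 p_i²) + (n−1)τ for τ ∈ (0,∞). Then: (1) λ(γ_p(τ)) = Λ_p(τ) for all τ > 0; (2) the derivative of Λ_p is Λ_p'(τ) = −Σ_{i=1}^n τ/√(τ² + 4 p_i²) + (n−1); (3) there is a unique τ_0 > 0 with Λ_p'(τ_0) = 0, Λ_p attains its maximum on (0,∞) uniquely at τ_0, and Λ_p(τ_0) > 0. -/
open Filter

/-!
Along `γ_p` every factor `u_k⁻¹ - u_k` equals `τ / p_k`, so each product `∏_{k ≠ j}` in `λ`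
is proportional to `p_j`; with `Σ p_j = 1/2` this collapses `λ(γ_p(τ))` to
`1 - 2 Σ u_i p_i - τ`, and `2 u_i p_i + τ = √(τ² + 4 p_i²)` turns it into `Λ_p(τ)`.
The derivative `Λ_p' = (n - 1) - Σ τ / √(τ² + 4 p_i²)` is strictly decreasing, equals
`n - 1 > 0` at `0`, and vanishes somewhere by the intermediate value theorem (the sum exceeds
`n - 1` at `τ = n` because `4 p_i² ≤ 1`). So `Λ_p` has a unique critical point `τ₀ > 0`, which
is its strict global maximum, and `Λ_p(τ₀) > Λ_p(0) = 0`.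
-/

theorem hasDerivAt_sqrt_sq_add {c : ℝ} (hc : 0 < c) (τ : ℝ) :
    HasDerivAt (fun t => √(t ^ 2 + c)) (τ / √(τ ^ 2 + c)) τ := by
  have h := ((hasDerivAt_pow 2 τ).add_const c).sqrt (by positivity)
  convert h using 1
  field_simp
  ring

theorem strictMono_div_sqrt_sq_add {c : ℝ} (hc : 0 < c) :
    StrictMono fun τ : ℝ => τ / √(τ ^ 2 + c) := by
  refine strictMono_of_hasDerivAt_pos
    (fun τ => (hasDerivAt_id τ).div (hasDerivAt_sqrt_sq_add hc τ) (by positivity)) fun τ => ?_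
  have hnum : 1 * √(τ ^ 2 + c) - τ * (τ / √(τ ^ 2 + c)) = c / √(τ ^ 2 + c) := by
    field_simp
    rw [Real.sq_sqrt (by positivity)]
    ring
  simp only [id, hnum]
  positivity

theorem lt_of_hasDerivAt_of_strictAnti {f f' : ℝ → ℝ} (hf : ∀ x, HasDerivAt f (f' x) x)
    (hf' : StrictAnti f') {x₀ x : ℝ} (hx₀ : f' x₀ = 0) (hx : x ≠ x₀) : f x < f x₀ := by
  have hcont : Continuous f := continuous_iff_continuousAt.2 fun x => (hf x).continuousAt
  rcases hx.lt_or_gt with hlt | hgt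
  · refine strictMonoOn_of_deriv_pos (convex_Iic x₀) hcont.continuousOn (fun y hy => ?_)
      hlt.le Set.self_mem_Iic hlt
    rw [interior_Iic] at hy
    rw [(hf y).deriv, ← hx₀]
    exact hf' hy
  · refine strictAntiOn_of_deriv_neg (convex_Ici x₀) hcont.continuousOn (fun y hy => ?_)
      Set.self_mem_Ici hgt.le hgt
    rw [interior_Ici] at hy
    rw [(hf y).deriv, ← hx₀]
    exact hf' hy

theorem strictMono_sum_div_sqrt_sq_add {ι : Type*} [Fintype ι] [Nonempty ι] {c : ι → ℝ}
    (hc : ∀ i, 0 < c i) : StrictMono fun τ : ℝ => ∑ i, τ / √(τ ^ 2 + c i) :=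
  fun _ _ hab => Finset.sum_lt_sum_of_nonempty Finset.univ_nonempty
    fun i _ => strictMono_div_sqrt_sq_add (hc i) hab

theorem card_sub_one_le_sum_div_sqrt_sq_add {ι : Type*} [Fintype ι] [Nonempty ι] {c : ι → ℝ}
    (hc : ∀ i, 0 < c i ∧ c i ≤ 1) :
    (Fintype.card ι : ℝ) - 1 ≤
      ∑ i, (Fintype.card ι : ℝ) / √((Fintype.card ι : ℝ) ^ 2 + c i) := by
  set N : ℝ := (Fintype.card ι : ℝ)
  have hN : 1 ≤ N := Nat.one_le_cast.2 Fintype.card_pos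
  have hs : 0 < √(N ^ 2 + 1) := by positivity
  have hs_le : √(N ^ 2 + 1) ≤ N + 1 :=
    Real.sqrt_le_iff.2 ⟨by positivity, by nlinarith⟩
  calc N - 1 ≤ N * (N / √(N ^ 2 + 1)) := by
        rw [mul_div_assoc', le_div_iff₀ hs]
        nlinarith
    _ = ∑ _i : ι, N / √(N ^ 2 + 1) := by simp [N]
    _ ≤ ∑ i, N / √(N ^ 2 + c i) := Finset.sum_le_sum fun i _ =>
        div_le_div_of_nonneg_left (by positivity) (Real.sqrt_pos.2 (by nlinarith [(hc i).1]))
          (Real.sqrt_le_sqrt (by linarith [(hc i).2]))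

theorem exists_sum_div_sqrt_sq_add_eq_card_sub_one {ι : Type*} [Fintype ι] [Nonempty ι]
    {c : ι → ℝ} (hc : ∀ i, 0 < c i ∧ c i ≤ 1) :
    ∃ τ : ℝ, ∑ i, τ / √(τ ^ 2 + c i) = (Fintype.card ι : ℝ) - 1 := by
  have hcont : Continuous fun τ : ℝ => ∑ i, τ / √(τ ^ 2 + c i) :=
    continuous_finsetSum _ fun i _ => continuous_id.div (by fun_prop)
      fun τ => (Real.sqrt_pos.2 (by nlinarith [(hc i).1])).ne'
  obtain ⟨τ, -, hτ⟩ := intermediate_value_Icc (Nat.cast_nonneg (Fintype.card ι))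
    hcont.continuousOn ⟨by simpa using Nat.one_le_iff_ne_zero.2 Fintype.card_ne_zero,
      card_sub_one_le_sum_div_sqrt_sq_add hc⟩
  exact ⟨τ, hτ⟩

namespace Cogrowth

noncomputable def Lam {n : ℕ} (p : Fin n → ℝ) (τ : ℝ) : ℝ :=
  1 - (∑ i, √(τ ^ 2 + 4 * p i ^ 2)) + (n - 1) * τ

theorem inv_gam_sub_gam {n : ℕ} (p : Fin n → ℝ) (τ : ℝ) (i : Fin n) :
    (gam p τ i)⁻¹ - gam p τ i = τ / p i := by
  have hs : √(τ ^ 2 * (p i)⁻¹ ^ 2 + 4) ^ 2 = (τ * (p i)⁻¹) ^ 2 + 4 := by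
    rw [Real.sq_sqrt (by positivity)]
    ring
  have hinv : (gam p τ i)⁻¹ = (√(τ ^ 2 * (p i)⁻¹ ^ 2 + 4) + τ * (p i)⁻¹) / 2 :=
    inv_eq_of_mul_eq_one_right (by simp only [gam]; linear_combination hs / 4)
  rw [hinv, gam, div_eq_mul_inv τ]
  ring

theorem sqrt_sq_add_four_mul_sq {n : ℕ} {p : Fin n → ℝ} {i : Fin n} (hp : 0 < p i) (τ : ℝ) :
    √(τ ^ 2 + 4 * p i ^ 2) = 2 * (gam p τ i * p i) + τ := by
  have h : τ ^ 2 + 4 * p i ^ 2 = p i ^ 2 * (τ ^ 2 * (p i)⁻¹ ^ 2 + 4) := by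
    field_simp
  rw [h, Real.sqrt_mul (sq_nonneg _), Real.sqrt_sq hp.le, gam]
  field_simp
  ring

theorem lamfun_eq_of_inv_sub_eq {n : ℕ} {u p : Fin n → ℝ} {τ : ℝ} (hτ : τ ≠ 0)
    (hp : ∀ i, p i ≠ 0) (hpsum : ∑ i, p i = 1 / 2) (hu : ∀ i, (u i)⁻¹ - u i = τ / p i) :
    lamfun u = 1 - 2 * ∑ i, u i * p i - τ := by
  set Q := ∏ k, τ / p k
  have hQ : Q ≠ 0 := Finset.prod_ne_zero_iff.2 fun k _ => div_ne_zero hτ (hp k)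
  have hprod : ∀ j, ∏ k ∈ Finset.univ.erase j, ((u k)⁻¹ - u k) = Q / τ * p j := fun j => by
    rw [Finset.prod_congr rfl fun k _ => hu k, show Q = ∏ k, τ / p k from rfl,
      ← Finset.prod_erase_mul _ _ (Finset.mem_univ j)]
    field_simp [hp j]
  have hnum : ∑ j, (1 - u j) * ∏ k ∈ Finset.univ.erase j, ((u k)⁻¹ - u k) =
      Q / τ * (1 / 2 - ∑ j, u j * p j) := by
    rw [← hpsum, mul_sub, Finset.mul_sum, Finset.mul_sum, ← Finset.sum_sub_distrib]
    exact Finset.sum_congr rfl fun j _ => by rw [hprod]; ring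
  rw [lamfun, Dfun, Finset.sum_congr rfl fun j _ => hprod j, ← Finset.mul_sum, hpsum, hnum,
    Finset.prod_congr rfl fun k _ => hu k]
  field_simp
  ring

theorem lamfun_gam {n : ℕ} {p : Fin n → ℝ} (hp : ∀ i, 0 < p i) (hpsum : ∑ i, p i = 1 / 2)
    {τ : ℝ} (hτ : τ ≠ 0) : lamfun (gam p τ) = Lam p τ := by
  rw [lamfun_eq_of_inv_sub_eq hτ (fun i => (hp i).ne') hpsum (inv_gam_sub_gam p τ), Lam,
    Finset.sum_congr rfl fun i _ => sqrt_sq_add_four_mul_sq (hp i) τ, Finset.sum_add_distrib,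
    ← Finset.mul_sum]
  simp
  ring

theorem hasDerivAt_Lam {n : ℕ} {p : Fin n → ℝ} (hp : ∀ i, 0 < p i) (τ : ℝ) :
    HasDerivAt (Lam p) ((n - 1) - ∑ i, τ / √(τ ^ 2 + 4 * p i ^ 2)) τ := by
  have hsum := HasDerivAt.fun_sum (u := Finset.univ) fun i _ =>
    hasDerivAt_sqrt_sq_add (by have := hp i; positivity : 0 < 4 * p i ^ 2) τ
  exact ((hsum.const_sub 1).add ((hasDerivAt_id τ).const_mul ((n : ℝ) - 1))).congr_deriv
    (by ring)

theorem Lam_zero {n : ℕ} {p : Fin n → ℝ} (hp : ∀ i, 0 ≤ p i) (hpsum : ∑ i, p i = 1 / 2) :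
    Lam p 0 = 0 := by
  have h : ∀ i, √((0 : ℝ) ^ 2 + 4 * p i ^ 2) = 2 * p i := fun i => by
    rw [show (0 : ℝ) ^ 2 + 4 * p i ^ 2 = (2 * p i) ^ 2 by ring,
      Real.sqrt_sq (mul_nonneg zero_le_two (hp i))]
  simp only [Lam, h, ← Finset.mul_sum, hpsum]
  ring

end Cogrowth

/-- properties of `Λ_p(τ) = 1 - Σ √(τ² + 4 p_i²) + (n-1) τ`. -/
theorem statement13 (n : ℕ) (hn : 2 ≤ n) (p : Fin n → ℝ) (hp : ∀ i, 0 < p i)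
    (hpsum : ∑ i, p i = 1 / 2) (Λ : ℝ → ℝ)
    (hΛ : ∀ τ : ℝ, Λ τ = 1 - (∑ i, Real.sqrt (τ ^ 2 + 4 * p i ^ 2)) + (n - 1) * τ) :
    (∀ τ : ℝ, 0 < τ → Cogrowth.lamfun (Cogrowth.gam p τ) = Λ τ) ∧
    (∀ τ : ℝ, 0 < τ →
      deriv Λ τ = -(∑ i, τ / Real.sqrt (τ ^ 2 + 4 * p i ^ 2)) + (n - 1)) ∧
    ∃ τ0 : ℝ, 0 < τ0 ∧ deriv Λ τ0 = 0 ∧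
      (∀ τ : ℝ, 0 < τ → deriv Λ τ = 0 → τ = τ0) ∧
      (∀ τ : ℝ, 0 < τ → τ ≠ τ0 → Λ τ < Λ τ0) ∧ 0 < Λ τ0 := by
  obtain rfl : Λ = Cogrowth.Lam p := funext hΛ
  have : Nonempty (Fin n) := ⟨⟨0, by omega⟩⟩
  have hc : ∀ i, 0 < 4 * p i ^ 2 ∧ 4 * p i ^ 2 ≤ 1 := fun i => by
    have hpi : p i ≤ 1 / 2 :=
      hpsum ▸ Finset.single_le_sum (fun j _ => (hp j).le) (Finset.mem_univ i)
    exact ⟨by have := hp i; positivity, by nlinarith [hp i]⟩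
  set F := fun τ : ℝ => ∑ i, τ / √(τ ^ 2 + 4 * p i ^ 2)
  obtain ⟨τ0, hτ0⟩ : ∃ τ0, F τ0 = n - 1 := by
    simpa using exists_sum_div_sqrt_sq_add_eq_card_sub_one hc
  have hF : StrictMono F := strictMono_sum_div_sqrt_sq_add fun i => (hc i).1
  have hanti : StrictAnti fun τ => (n - 1) - F τ := fun _ _ h => sub_lt_sub_left (hF h) _
  have hderiv : ∀ τ, deriv (Cogrowth.Lam p) τ = (n - 1) - F τ :=
    fun τ => (Cogrowth.hasDerivAt_Lam hp τ).deriv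
  have hτ0_crit : deriv (Cogrowth.Lam p) τ0 = 0 := by rw [hderiv, hτ0, sub_self]
  have hτ0_pos : 0 < τ0 := hF.lt_iff_lt.1 <| by
    rw [hτ0]
    simp only [F, zero_div, Finset.sum_const_zero, sub_pos, Nat.one_lt_cast]
    exact hn
  have hmax : ∀ τ ≠ τ0, Cogrowth.Lam p τ < Cogrowth.Lam p τ0 := fun τ =>
    lt_of_hasDerivAt_of_strictAnti (Cogrowth.hasDerivAt_Lam hp) hanti (by rwa [← hderiv])
  refine ⟨fun τ hτ => Cogrowth.lamfun_gam hp hpsum hτ.ne', fun τ _ => by rw [hderiv]; ring,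
    τ0, hτ0_pos, hτ0_crit, fun τ _ h => hanti.injective ?_, fun τ _ => hmax τ, ?_⟩
  · rw [← hderiv, ← hderiv, h, hτ0_crit]
  · simpa [Cogrowth.Lam_zero (fun i => (hp i).le) hpsum] using hmax 0 hτ0_pos.ne
end
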